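/- arXiv:2605.31306 — 4 statements merged into one kernel-verified Lean document; each statement's English description precedes it below -/
import Mathlib

section
/- Let ρ be a probability measure on a measurable space Θ, let h, s : Θ → ℝ be bounded measurable functions, and let g₁, g₂ : (0,∞) → (0,∞) satisfy g₁(t) → 0 and g₂(t) → 0 as t → 0⁺. Let Ψ : (0,∞) → (Θ → ℝ) be a family of bounded measurable functions satisfying the uniform inner expansion sup_θ |Ψ_δ(θ) − h(θ) − g₁(δ)·s(θ)| = o(g₁(δ)) as δ → 0⁺. Let M : (0,∞) × (Θ → ℝ) → ℝ and S : (Θ → ℝ) → ℝ be such that (i) S is continuous at h with respect to the supremum norm, and (ii) the outer expansion holds uniformly near h: for every η > 0 there exist ε₀ > 0 and r > 0 such that |M(ε, ψ) − ∫ ψ dρ − g₂(ε)·S(ψ)| ≤ η·g₂(ε) for all ε ∈ (0, ε₀) and all bounded measurable ψ with sup_θ |ψ(θ) − h(θ)| ≤ r. Then V(ε, δ) := M(ε, Ψ_δ) satisfies: for every η > 0 there exist ε₀, δ₀ > 0 such that |V(ε, δ) − ∫ h dρ − g₁(δ)·∫ s dρ − g₂(ε)·S(h)| ≤ η·(g₁(δ)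 + g₂(ε)) for all ε ∈ (0, ε₀) and δ ∈ (0, δ₀). -/
open MeasureTheory Filter Set Topology

/-!
Substituting the inner expansion into the outer one: uniformity of the inner expansion together
with `g₁ δ → 0` puts `Ψ δ` within any sup-norm radius of `h` for small `δ`, so the outer expansion
applies at `ψ = Ψ δ`. Integrating the inner expansion against the probability measure `ρ` turns
`∫ Ψ δ dρ` into `∫ h dρ + g₁(δ) ∫ s dρ + o(g₁(δ))`, and continuity of `S` at `h` turns
`g₂(ε) S(Ψ δ)` into `g₂(ε) S(h) + o(g₂(ε))`.
-/

lemma abs_sub_le_of_abs_sub_sub_mul_le {a b t c e C : ℝ} (ht : 0 ≤ t) (hc : |c| ≤ C)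
    (h : |a - b - t * c| ≤ e) : |a - b| ≤ e + t * C :=
  calc |a - b| = |(a - b - t * c) + t * c| := by ring_nf
    _ ≤ |a - b - t * c| + |t * c| := abs_add_le _ _
    _ ≤ e + t * C := by
      rw [abs_mul, abs_of_nonneg ht]
      exact add_le_add h (mul_le_mul_of_nonneg_left hc ht)

lemma abs_sub_sub_sub_mul_le {V I J a u σ σ' A B c : ℝ} (hV : |V - I - u * σ| ≤ A)
    (hI : |I - J - a| ≤ B) (hσ : |σ - σ'| ≤ c) (hu : 0 ≤ u) :
    |V - J - a - u * σ'| ≤ A + B + u * c :=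
  calc |V - J - a - u * σ'| = |(V - I - u * σ) + (I - J - a) + u * (σ - σ')| := by ring_nf
    _ ≤ |V - I - u * σ| + |I - J - a| + |u * (σ - σ')| := abs_add_three _ _ _
    _ ≤ A + B + u * c := by
      rw [abs_mul, abs_of_nonneg hu]
      exact add_le_add (add_le_add hV hI) (mul_le_mul_of_nonneg_left hσ hu)

section Integral

variable {α : Type*} [MeasurableSpace α] {μ : Measure α}

lemma Measurable.integrable_of_abs_le [IsFiniteMeasure μ] {f : α → ℝ} (hf : Measurable f)
    {C : ℝ} (hC : ∀ x, |f x| ≤ C) : Integrable f μ :=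
  .of_bound hf.aestronglyMeasurable C (ae_of_all _ hC)

lemma abs_integral_sub_sub_mul_le [IsProbabilityMeasure μ] {f g k : α → ℝ}
    (hf : Integrable f μ) (hg : Integrable g μ) (hk : Integrable k μ) {t e : ℝ}
    (h : ∀ x, |f x - g x - t * k x| ≤ e) :
    |∫ x, f x ∂μ - ∫ x, g x ∂μ - t * ∫ x, k x ∂μ| ≤ e := by
  have hlin : ∫ x, f x ∂μ - ∫ x, g x ∂μ - t * ∫ x, k x ∂μ = ∫ x, (f x - g x - t * k x) ∂μ := by
    rw [integral_sub (f := fun x => f x - g x) (hf.sub hg) (hk.const_mul t), integral_sub hf hg,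
      integral_const_mul]
  simpa [hlin] using
    norm_integral_le_of_norm_le_const (f := fun x => f x - g x - t * k x) (ae_of_all μ h)

end Integral

theorem bayesian_expansion_general
    {Θ : Type*} [MeasurableSpace Θ]
    (ρ : Measure Θ) [IsProbabilityMeasure ρ]
    (h s : Θ → ℝ)
    (hh_meas : Measurable h) (hh_bdd : ∃ C : ℝ, ∀ θ, |h θ| ≤ C)
    (hs_meas : Measurable s) (hs_bdd : ∃ C : ℝ, ∀ θ, |s θ| ≤ C)
    (g₁ g₂ : ℝ → ℝ)
    (hg₁_pos : ∀ t, 0 < t → 0 < g₁ t) (hg₂_pos : ∀ t, 0 < t → 0 < g₂ t)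
    (hg₁_lim : Tendsto g₁ (𝓝[>] (0 : ℝ)) (𝓝 0))
    (Ψ : ℝ → Θ → ℝ)
    (hΨ_meas : ∀ δ, 0 < δ → Measurable (Ψ δ))
    (hΨ_bdd : ∀ δ, 0 < δ → ∃ C : ℝ, ∀ θ, |Ψ δ θ| ≤ C)
    -- uniform inner expansion: `sup_θ |Ψ_δ(θ) − h(θ) − g₁(δ)·s(θ)| = o(g₁(δ))` as `δ → 0⁺`
    (hInner : ∀ η > (0 : ℝ), ∃ δ₀ > (0 : ℝ), ∀ δ, 0 < δ → δ < δ₀ →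
      ∀ θ, |Ψ δ θ - h θ - g₁ δ * s θ| ≤ η * g₁ δ)
    (M : ℝ → (Θ → ℝ) → ℝ) (S : (Θ → ℝ) → ℝ)
    -- `S` is continuous at `h` in the supremum norm
    (hS_cont : ∀ η > (0 : ℝ), ∃ r > (0 : ℝ), ∀ ψ : Θ → ℝ,
      (∀ θ, |ψ θ - h θ| ≤ r) → |S ψ - S h| ≤ η)
    -- uniform outer expansion near `h`
    (hOuter : ∀ η > (0 : ℝ), ∃ ε₀ > (0 : ℝ), ∃ r > (0 : ℝ), ∀ ε, 0 < ε → ε < ε₀ →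
      ∀ ψ : Θ → ℝ, Measurable ψ → (∃ C : ℝ, ∀ θ, |ψ θ| ≤ C) →
      (∀ θ, |ψ θ - h θ| ≤ r) →
      |M ε ψ - (∫ θ, ψ θ ∂ρ) - g₂ ε * S ψ| ≤ η * g₂ ε) :
    ∀ η > (0 : ℝ), ∃ ε₀ > (0 : ℝ), ∃ δ₀ > (0 : ℝ), ∀ ε δ, 0 < ε → ε < ε₀ → 0 < δ → δ < δ₀ →
      |M ε (Ψ δ) - (∫ θ, h θ ∂ρ) - g₁ δ * (∫ θ, s θ ∂ρ) - g₂ ε * S h|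
        ≤ η * (g₁ δ + g₂ ε) := by
  intro η hη
  obtain ⟨Ch, hCh⟩ := hh_bdd
  obtain ⟨Cs, hCs⟩ := hs_bdd
  obtain ⟨r₁, hr₁, hS⟩ := hS_cont (η / 2) (half_pos hη)
  obtain ⟨ε₀, hε₀, r₂, hr₂, hM⟩ := hOuter (η / 2) (half_pos hη)
  have hsmall : ∀ᶠ δ in 𝓝[>] (0 : ℝ), (∀ θ, |Ψ δ θ - h θ - g₁ δ * s θ| ≤ η * g₁ δ) ∧
      (η + Cs) * g₁ δ < min r₁ r₂ := by
    obtain ⟨δ₁, hδ₁, hI⟩ := hInner η hη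
    refine ((nhdsGT_basis 0).eventually_iff.2 ⟨δ₁, hδ₁, fun δ hδ => hI δ hδ.1 hδ.2⟩).and ?_
    have hlim := hg₁_lim.const_mul (η + Cs)
    rw [mul_zero] at hlim
    exact hlim.eventually (gt_mem_nhds (lt_min hr₁ hr₂))
  obtain ⟨δ₀, hδ₀, hδ₀_small⟩ := (nhdsGT_basis 0).eventually_iff.1 hsmall
  refine ⟨ε₀, hε₀, δ₀, hδ₀, fun ε δ hε hεlt hδ hδlt => ?_⟩
  obtain ⟨hI, hg₁_small⟩ := hδ₀_small ⟨hδ, hδlt⟩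
  have hg₁ := hg₁_pos δ hδ
  have hclose : ∀ θ, |Ψ δ θ - h θ| ≤ min r₁ r₂ := fun θ =>
    (abs_sub_le_of_abs_sub_sub_mul_le hg₁.le (hCs θ) (hI θ)).trans (by linarith)
  obtain ⟨CΨ, hCΨ⟩ := hΨ_bdd δ hδ
  have hOuterΨ := hM ε hε hεlt (Ψ δ) (hΨ_meas δ hδ) ⟨CΨ, hCΨ⟩ fun θ =>
    (hclose θ).trans (min_le_right _ _)
  have hIntegral := abs_integral_sub_sub_mul_le (μ := ρ)
    ((hΨ_meas δ hδ).integrable_of_abs_le hCΨ) (hh_meas.integrable_of_abs_le hCh)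
    (hs_meas.integrable_of_abs_le hCs) hI
  have hSΨ := hS (Ψ δ) fun θ => (hclose θ).trans (min_le_left _ _)
  calc _ ≤ η / 2 * g₂ ε + η * g₁ δ + g₂ ε * (η / 2) :=
        abs_sub_sub_sub_mul_le hOuterΨ hIntegral hSΨ (hg₂_pos ε hε).le
    _ = η * (g₁ δ + g₂ ε) := by ring

/-- Abstract Bayesian expansion (Theorem 1 of the paper): if the inner worst-case
value `Ψ δ` expands uniformly as `h + g₁(δ)·s + o(g₁(δ))`, and the outer worst-case
functional `M ε` expands uniformly near `h` as `∫ψ dρ + g₂(ε)·S(ψ) + o(g₂(ε))`,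
with `S` sup-norm continuous at `h`, then the nested worst-case value
`V(ε,δ) = M ε (Ψ δ)` expands as
`∫h dρ + g₁(δ)·∫s dρ + g₂(ε)·S(h) + o(g₁(δ)) + o(g₂(ε))`. -/
theorem bayesian_expansion
    {Θ : Type*} [MeasurableSpace Θ]
    (ρ : Measure Θ) [IsProbabilityMeasure ρ]
    (h s : Θ → ℝ)
    (hh_meas : Measurable h) (hh_bdd : ∃ C : ℝ, ∀ θ, |h θ| ≤ C)
    (hs_meas : Measurable s) (hs_bdd : ∃ C : ℝ, ∀ θ, |s θ| ≤ C)
    (g₁ g₂ : ℝ → ℝ)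
    (hg₁_pos : ∀ t, 0 < t → 0 < g₁ t) (hg₂_pos : ∀ t, 0 < t → 0 < g₂ t)
    (hg₁_lim : Tendsto g₁ (𝓝[>] (0 : ℝ)) (𝓝 0))
    (hg₂_lim : Tendsto g₂ (𝓝[>] (0 : ℝ)) (𝓝 0))
    (Ψ : ℝ → Θ → ℝ)
    (hΨ_meas : ∀ δ, 0 < δ → Measurable (Ψ δ))
    (hΨ_bdd : ∀ δ, 0 < δ → ∃ C : ℝ, ∀ θ, |Ψ δ θ| ≤ C)
    -- uniform inner expansion: `sup_θ |Ψ_δ(θ) − h(θ) − g₁(δ)·s(θ)| = o(g₁(δ))` as `δ → 0⁺`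
    (hInner : ∀ η > (0 : ℝ), ∃ δ₀ > (0 : ℝ), ∀ δ, 0 < δ → δ < δ₀ →
      ∀ θ, |Ψ δ θ - h θ - g₁ δ * s θ| ≤ η * g₁ δ)
    (M : ℝ → (Θ → ℝ) → ℝ) (S : (Θ → ℝ) → ℝ)
    -- `S` is continuous at `h` in the supremum norm
    (hS_cont : ∀ η > (0 : ℝ), ∃ r > (0 : ℝ), ∀ ψ : Θ → ℝ,
      (∀ θ, |ψ θ - h θ| ≤ r) → |S ψ - S h| ≤ η)
    -- uniform outer expansion near `h`
    (hOuter : ∀ η > (0 : ℝ), ∃ ε₀ > (0 : ℝ), ∃ r > (0 : ℝ), ∀ ε, 0 < ε → ε < ε₀ →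
      ∀ ψ : Θ → ℝ, Measurable ψ → (∃ C : ℝ, ∀ θ, |ψ θ| ≤ C) →
      (∀ θ, |ψ θ - h θ| ≤ r) →
      |M ε ψ - (∫ θ, ψ θ ∂ρ) - g₂ ε * S ψ| ≤ η * g₂ ε) :
    ∀ η > (0 : ℝ), ∃ ε₀ > (0 : ℝ), ∃ δ₀ > (0 : ℝ), ∀ ε δ, 0 < ε → ε < ε₀ → 0 < δ → δ < δ₀ →
      |M ε (Ψ δ) - (∫ θ, h θ ∂ρ) - g₁ δ * (∫ θ, s θ ∂ρ) - g₂ ε * S h|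
        ≤ η * (g₁ δ + g₂ ε) :=
  bayesian_expansion_general ρ h s hh_meas hh_bdd hs_meas hs_bdd g₁ g₂ hg₁_pos hg₂_pos hg₁_lim Ψ
    hΨ_meas hΨ_bdd hInner M S hS_cont hOuter
end

section
/- Let P be a probability measure on a measurable space Ω, let f : Ω → ℝ be bounded and measurable, and let δ > 0. Over all measurable q : Ω → ℝ with ∫ q² dP < ∞ and ∫ q dP = 1, the functional J(q) := ∫ q·f dP − (1/δ)·∫ (1/2)(q − 1)² dP attains its maximum at q* := 1 + δ·(f − m_P(f)), this maximizer is unique up to P-a.e. equality, the maximal value is J(q*) = m_P(f) + (δ/2)·Var_P(f), and the expected cost under the worst-case density is ∫ q*·f dP = m_P(f) + δ·Var_P(f). -/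
/-! Completing the square: for every `q ∈ L²(P)` with `∫ q dP = 1`,
`J(q) = J(q*) - (1 / 2δ) ∫ (q - q*)² dP`, because `q* - 1 = δ (f - m_P(f))` makes the cross term
`∫ (q - q*) (f - m_P(f)) dP` cancel the linear part `∫ (q - q*) f dP` up to
`m_P(f) ∫ (q - q*) dP = 0`. Hence `q*` is the maximizer, unique a.e., and the values follow from
`∫ (f - m_P(f)) f dP = Var_P(f)`. -/

open MeasureTheory

variable {Ω : Type*} [MeasurableSpace Ω]

/-- Mean of `f` under `P`. -/
noncomputable def meanP (P : Measure Ω) (f : Ω → ℝ) : ℝ := ∫ ω, f ω ∂P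

/-- Variance of `f` under `P`. -/
noncomputable def varP (P : Measure Ω) (f : Ω → ℝ) : ℝ :=
  ∫ ω, (f ω - meanP P f) ^ 2 ∂P

noncomputable def chi2WorstCaseDensity (P : Measure Ω) (f : Ω → ℝ) (δ : ℝ) (ω : Ω) : ℝ :=
  1 + δ * (f ω - meanP P f)

noncomputable def chi2PenaltyObjective (P : Measure Ω) (f : Ω → ℝ) (δ : ℝ) (q : Ω → ℝ) : ℝ :=
  (∫ ω, q ω * f ω ∂P) - (1 / δ) * ∫ ω, (1 / 2) * (q ω - 1) ^ 2 ∂P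

section

variable {P : Measure Ω} {f q : Ω → ℝ} {δ : ℝ}

lemma ae_eq_of_integral_sub_sq_eq_zero {g : Ω → ℝ}
    (hint : Integrable (fun ω => (q ω - g ω) ^ 2) P) (h : ∫ ω, (q ω - g ω) ^ 2 ∂P = 0) :
    q =ᵐ[P] g := by
  have hsq : (fun ω => (q ω - g ω) ^ 2) =ᵐ[P] 0 :=
    (integral_eq_zero_iff_of_nonneg (fun ω => sq_nonneg _) hint).mp h
  filter_upwards [hsq] with ω hω
  exact sub_eq_zero.mp (pow_eq_zero_iff two_ne_zero |>.mp hω)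

variable [IsProbabilityMeasure P]

lemma integral_sub_meanP (hf : Integrable f P) : ∫ ω, (f ω - meanP P f) ∂P = 0 := by
  rw [integral_sub hf (integrable_const _), integral_const, meanP]
  simp

lemma memLp_sub_meanP (hf : MemLp f 2 P) : MemLp (fun ω => f ω - meanP P f) 2 P :=
  hf.sub (memLp_const _)

lemma integral_sub_meanP_mul_self (hf : MemLp f 2 P) :
    ∫ ω, (f ω - meanP P f) * f ω ∂P = varP P f := by
  have hsq : Integrable (fun ω => (f ω - meanP P f) ^ 2) P := (memLp_sub_meanP hf).integrable_sq
  have hlin : Integrable (fun ω => meanP P f * (f ω - meanP P f)) P :=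
    ((memLp_sub_meanP hf).integrable one_le_two).const_mul _
  calc ∫ ω, (f ω - meanP P f) * f ω ∂P
      = ∫ ω, ((f ω - meanP P f) ^ 2 + meanP P f * (f ω - meanP P f)) ∂P := by
        congr 1; ext ω; ring
    _ = varP P f := by
        rw [integral_add hsq hlin, integral_const_mul,
          integral_sub_meanP (hf.integrable one_le_two), mul_zero, add_zero, varP]

lemma memLp_chi2WorstCaseDensity (hf : MemLp f 2 P) (δ : ℝ) :
    MemLp (chi2WorstCaseDensity P f δ) 2 P := by
  have hone : MemLp (fun _ => (1 : ℝ)) 2 P := memLp_const 1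
  have hlin : MemLp (fun ω => δ * (f ω - meanP P f)) 2 P := (memLp_sub_meanP hf).const_mul δ
  exact hone.add hlin

lemma integral_chi2WorstCaseDensity (hf : Integrable f P) (δ : ℝ) :
    ∫ ω, chi2WorstCaseDensity P f δ ω ∂P = 1 := by
  have hlin : Integrable (fun ω => δ * (f ω - meanP P f)) P :=
    (hf.sub (integrable_const _)).const_mul δ
  unfold chi2WorstCaseDensity
  rw [integral_add (integrable_const _) hlin, integral_const_mul, integral_sub_meanP hf]
  simp

lemma integral_chi2WorstCaseDensity_mul (hf : MemLp f 2 P) (δ : ℝ) :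
    ∫ ω, chi2WorstCaseDensity P f δ ω * f ω ∂P = meanP P f + δ * varP P f := by
  have hlin : Integrable (fun ω => δ * ((f ω - meanP P f) * f ω)) P :=
    ((memLp_sub_meanP hf).integrable_mul hf).const_mul δ
  calc ∫ ω, chi2WorstCaseDensity P f δ ω * f ω ∂P
      = ∫ ω, (f ω + δ * ((f ω - meanP P f) * f ω)) ∂P := by
        congr 1; ext ω; unfold chi2WorstCaseDensity; ring
    _ = meanP P f + δ * varP P f := by
        rw [integral_add (hf.integrable one_le_two) hlin, integral_const_mul,
          integral_sub_meanP_mul_self hf, meanP]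

lemma chi2PenaltyObjective_chi2WorstCaseDensity (hf : MemLp f 2 P) :
    chi2PenaltyObjective P f δ (chi2WorstCaseDensity P f δ)
      = meanP P f + (δ / 2) * varP P f := by
  have hpenalty : ∫ ω, (1 / 2) * (chi2WorstCaseDensity P f δ ω - 1) ^ 2 ∂P
      = δ ^ 2 / 2 * varP P f := by
    rw [varP, ← integral_const_mul]
    congr 1; ext ω; unfold chi2WorstCaseDensity; ring
  rw [chi2PenaltyObjective, integral_chi2WorstCaseDensity_mul hf, hpenalty]
  field_simp
  ring

lemma integrable_chi2PenaltyIntegrand (hq : MemLp q 2 P) (hf : MemLp f 2 P) (δ : ℝ) :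
    Integrable (fun ω => q ω * f ω - 1 / δ * (1 / 2 * (q ω - 1) ^ 2)) P :=
  (hq.integrable_mul hf).sub (((hq.sub (memLp_const 1)).integrable_sq.const_mul _).const_mul _)

lemma chi2PenaltyObjective_eq_integral (hq : MemLp q 2 P) (hf : MemLp f 2 P) :
    chi2PenaltyObjective P f δ q
      = ∫ ω, (q ω * f ω - 1 / δ * (1 / 2 * (q ω - 1) ^ 2)) ∂P := by
  have hqf : Integrable (fun ω => q ω * f ω) P := hq.integrable_mul hf
  have hpenalty : Integrable (fun ω => 1 / δ * (1 / 2 * (q ω - 1) ^ 2)) P :=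
    ((hq.sub (memLp_const 1)).integrable_sq.const_mul _).const_mul _
  rw [integral_sub hqf hpenalty, integral_const_mul, chi2PenaltyObjective]

lemma chi2PenaltyObjective_eq_sub (hq : MemLp q 2 P) (hq₁ : ∫ ω, q ω ∂P = 1) (hf : MemLp f 2 P)
    (hδ : δ ≠ 0) :
    chi2PenaltyObjective P f δ q = meanP P f + (δ / 2) * varP P f
      - 1 / (2 * δ) * ∫ ω, (q ω - chi2WorstCaseDensity P f δ ω) ^ 2 ∂P := by
  set q' := chi2WorstCaseDensity P f δ
  have hq' : MemLp q' 2 P := memLp_chi2WorstCaseDensity hf δ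
  have hgap : chi2PenaltyObjective P f δ q - chi2PenaltyObjective P f δ q'
      = ∫ ω, (meanP P f * (q ω - q' ω) - 1 / (2 * δ) * (q ω - q' ω) ^ 2) ∂P := by
    rw [chi2PenaltyObjective_eq_integral hq hf, chi2PenaltyObjective_eq_integral hq' hf,
      ← integral_sub (integrable_chi2PenaltyIntegrand hq hf δ)
        (integrable_chi2PenaltyIntegrand hq' hf δ)]
    congr 1; ext ω; simp only [q', chi2WorstCaseDensity]; field_simp; ring
  have hlin : Integrable (fun ω => meanP P f * (q ω - q' ω)) P :=
    ((hq.sub hq').integrable one_le_two).const_mul _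
  have hsq : Integrable (fun ω => 1 / (2 * δ) * (q ω - q' ω) ^ 2) P :=
    (hq.sub hq').integrable_sq.const_mul _
  rw [integral_sub hlin hsq, integral_const_mul, integral_const_mul,
    integral_sub (hq.integrable one_le_two) (hq'.integrable one_le_two), hq₁,
    integral_chi2WorstCaseDensity (hf.integrable one_le_two),
    chi2PenaltyObjective_chi2WorstCaseDensity hf] at hgap
  linarith

lemma chi2PenaltyObjective_le (hq : MemLp q 2 P) (hq₁ : ∫ ω, q ω ∂P = 1) (hf : MemLp f 2 P)
    (hδ : 0 < δ) : chi2PenaltyObjective P f δ q ≤ meanP P f + (δ / 2) * varP P f := by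
  rw [chi2PenaltyObjective_eq_sub hq hq₁ hf hδ.ne']
  have hgap : 0 ≤ ∫ ω, (q ω - chi2WorstCaseDensity P f δ ω) ^ 2 ∂P :=
    integral_nonneg fun ω => sq_nonneg _
  exact sub_le_self _ (mul_nonneg (by positivity) hgap)

lemma ae_eq_chi2WorstCaseDensity_of_chi2PenaltyObjective_eq (hq : MemLp q 2 P)
    (hq₁ : ∫ ω, q ω ∂P = 1) (hf : MemLp f 2 P) (hδ : δ ≠ 0)
    (hmax : chi2PenaltyObjective P f δ q = meanP P f + (δ / 2) * varP P f) :
    q =ᵐ[P] chi2WorstCaseDensity P f δ := by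
  rw [chi2PenaltyObjective_eq_sub hq hq₁ hf hδ, sub_eq_self, mul_eq_zero] at hmax
  exact ae_eq_of_integral_sub_sq_eq_zero (hq.sub (memLp_chi2WorstCaseDensity hf δ)).integrable_sq
    (hmax.resolve_left (by simpa using hδ))

end

/-- Penalty-form worst-case problem for the modified χ²-divergence: over measurable `q`
with `∫ q² dP < ∞` and `∫ q dP = 1`, the functional
`J(q) = ∫ q f dP − (1/δ)∫ ½(q−1)² dP` is maximized by `q* = 1 + δ(f − m_P(f))`, the
maximizer is unique up to `P`-a.e. equality, the maximal value is
`m_P(f) + (δ/2)·Var_P(f)`, and the expected cost under the worst-case density is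
`m_P(f) + δ·Var_P(f)`. -/
theorem chi2_penalty_worst_case
    (P : Measure Ω) [IsProbabilityMeasure P]
    (f : Ω → ℝ) (hf : Measurable f) (hf_bdd : ∃ C : ℝ, ∀ ω, |f ω| ≤ C)
    (δ : ℝ) (hδ : 0 < δ) :
    (∀ q : Ω → ℝ, Measurable q → Integrable (fun ω => (q ω) ^ 2) P →
      (∫ ω, q ω ∂P = 1) →
      (∫ ω, q ω * f ω ∂P) - (1 / δ) * ∫ ω, (1 / 2) * (q ω - 1) ^ 2 ∂P
        ≤ meanP P f + (δ / 2) * varP P f) ∧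
    (∀ q : Ω → ℝ, Measurable q → Integrable (fun ω => (q ω) ^ 2) P →
      (∫ ω, q ω ∂P = 1) →
      (∫ ω, q ω * f ω ∂P) - (1 / δ) * ∫ ω, (1 / 2) * (q ω - 1) ^ 2 ∂P
        = meanP P f + (δ / 2) * varP P f →
      q =ᵐ[P] fun ω => 1 + δ * (f ω - meanP P f)) ∧
    Integrable (fun ω => (1 + δ * (f ω - meanP P f)) ^ 2) P ∧
    (∫ ω, (1 + δ * (f ω - meanP P f)) ∂P = 1) ∧
    ((∫ ω, (1 + δ * (f ω - meanP P f)) * f ω ∂P)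
        - (1 / δ) * ∫ ω, (1 / 2) * ((1 + δ * (f ω - meanP P f)) - 1) ^ 2 ∂P
      = meanP P f + (δ / 2) * varP P f) ∧
    (∫ ω, (1 + δ * (f ω - meanP P f)) * f ω ∂P = meanP P f + δ * varP P f) := by
  obtain ⟨C, hC⟩ := hf_bdd
  have hf₂ : MemLp f 2 P := MemLp.of_bound hf.aestronglyMeasurable C (ae_of_all _ hC)
  have hL2 (q : Ω → ℝ) (hq : Measurable q) (hq₂ : Integrable (fun ω => q ω ^ 2) P) :
      MemLp q 2 P :=
    (memLp_two_iff_integrable_sq hq.aestronglyMeasurable).2 hq₂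
  exact ⟨fun q hq hq₂ hq₁ => chi2PenaltyObjective_le (hL2 q hq hq₂) hq₁ hf₂ hδ,
    fun q hq hq₂ hq₁ hmax => ae_eq_chi2WorstCaseDensity_of_chi2PenaltyObjective_eq
      (hL2 q hq hq₂) hq₁ hf₂ hδ.ne' hmax,
    (memLp_chi2WorstCaseDensity hf₂ δ).integrable_sq,
    integral_chi2WorstCaseDensity (hf₂.integrable one_le_two) δ,
    chi2PenaltyObjective_chi2WorstCaseDensity hf₂,
    integral_chi2WorstCaseDensity_mul hf₂ δ⟩
end

section
/- Let ρ be a probability measure on a measurable space Θ, let L be a Markov kernel from Θ to a measurable space 𝒴, let f : Θ × 𝒴 → ℝ be bounded and measurable, and let ε, δ > 0. Define g(θ) := ∫ f(θ, y) L(θ)(dy), v(θ) := Var_{L(θ)}(f(θ, ·)), Ψ_δ(θ) := g(θ) + δ·v(θ), the inner worst-case density q^θ_δ(y) := 1 + δ·(f(θ, y) − g(θ)) with respect to L(θ), and the outer worst-case density η_ε(θ) := 1 + ε·(Ψ_δ(θ) − ∫ Ψ_δ dρ) with respect to ρ. Then the nested worst-case expected cost satisfies the exact identity ∫_Θ η_ε(θ)·(∫_𝒴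 q^θ_δ(y)·f(θ, y) L(θ)(dy)) dρ(θ) = ∫ g dρ + δ·∫ v dρ + ε·Var_ρ(Ψ_δ). -/
/-!
Both worst-case densities are first-order tilts `1 + t (a - E a)` of a base measure, and for any
square-integrable `a` under a probability measure `∫ (1 + t (a - E a)) a = E a + t Var a`, because
the extra term `t ∫ (a - E a) a` equals `t ∫ (a - E a)²`. Applied under each `L θ` to `f (θ, ·)`
this turns the inner integral into `Ψ_δ θ`; applied under `ρ` to the (bounded) `Ψ_δ` it gives
`E_ρ Ψ_δ + ε Var_ρ Ψ_δ`, and `E_ρ Ψ_δ` splits by linearity.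
-/

open MeasureTheory ProbabilityTheory

variable {Ω : Type*} [MeasurableSpace Ω]

/-- Conditional expected cost `g(θ) = ∫ f(θ,y) L(θ)(dy)`. -/
noncomputable def condMean {Θ 𝒴 : Type*} [MeasurableSpace Θ] [MeasurableSpace 𝒴]
    (L : Kernel Θ 𝒴) (f : Θ × 𝒴 → ℝ) (θ : Θ) : ℝ :=
  ∫ y, f (θ, y) ∂(L θ)

/-- Conditional variance `v(θ) = Var_{L(θ)}(f(θ,·))`. -/
noncomputable def condVar {Θ 𝒴 : Type*} [MeasurableSpace Θ] [MeasurableSpace 𝒴]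
    (L : Kernel Θ 𝒴) (f : Θ × 𝒴 → ℝ) (θ : Θ) : ℝ :=
  ∫ y, (f (θ, y) - condMean L f θ) ^ 2 ∂(L θ)

theorem integral_one_add_mul_sub_meanP_mul (P : Measure Ω) [IsProbabilityMeasure P] {a : Ω → ℝ}
    (ha : MemLp a 2 P) (t : ℝ) :
    ∫ ω, (1 + t * (a ω - meanP P a)) * a ω ∂P = meanP P a + t * varP P a := by
  set m := meanP P a
  have ha₁ : Integrable a P := ha.integrable one_le_two
  have hsq : Integrable (fun ω => (a ω - m) ^ 2) P := (ha.sub (memLp_const m)).integrable_sq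
  have hcentered : Integrable (fun ω => a ω - m) P := ha₁.sub (integrable_const m)
  have hmain : Integrable (fun ω => a ω + t * (a ω - m) ^ 2) P := ha₁.add (hsq.const_mul t)
  calc ∫ ω, (1 + t * (a ω - m)) * a ω ∂P
      = ∫ ω, a ω + t * (a ω - m) ^ 2 + t * m * (a ω - m) ∂P := by
        congr 1; ext ω; ring
    _ = m + t * varP P a + t * m * (m - m) := by
        rw [integral_add hmain (hcentered.const_mul _),
          integral_add ha₁ (hsq.const_mul t), integral_const_mul, integral_const_mul,
          integral_sub ha₁ (integrable_const m), integral_const, probReal_univ, one_smul]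
        rfl
    _ = m + t * varP P a := by ring

theorem Measurable.memLp_of_abs_le {α : Type*} [MeasurableSpace α] {μ : Measure α}
    [IsFiniteMeasure μ] {h : α → ℝ} (hm : Measurable h) {C : ℝ} (hC : ∀ x, |h x| ≤ C)
    (p : ENNReal) : MemLp h p μ :=
  .of_bound hm.aestronglyMeasurable C (ae_of_all _ fun x => (Real.norm_eq_abs _).trans_le (hC x))

section condMoments

variable {Θ 𝒴 : Type*} [MeasurableSpace Θ] [MeasurableSpace 𝒴] {L : Kernel Θ 𝒴}
  {f : Θ × 𝒴 → ℝ}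

theorem measurable_condMean [IsSFiniteKernel L] (hf : Measurable f) :
    Measurable (condMean L f) :=
  (hf.stronglyMeasurable.integral_kernel_prod_right (f := fun θ y => f (θ, y))).measurable

theorem abs_condMean_le [IsMarkovKernel L] {C : ℝ} (hC : ∀ p, |f p| ≤ C) (θ : Θ) :
    |condMean L f θ| ≤ C := by
  have h := norm_integral_le_of_norm_le_const (μ := L θ) (f := fun y => f (θ, y))
    (ae_of_all _ fun y => (Real.norm_eq_abs _).trans_le (hC (θ, y)))
  rwa [probReal_univ, mul_one] at h

theorem condVar_eq_condMean :
    condVar L f = condMean L (fun p => (f p - condMean L f p.1) ^ 2) :=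
  rfl

theorem measurable_condVar [IsSFiniteKernel L] (hf : Measurable f) :
    Measurable (condVar L f) :=
  measurable_condMean ((hf.sub ((measurable_condMean hf).comp measurable_fst)).pow_const 2)

theorem abs_condVar_le [IsMarkovKernel L] {C : ℝ} (hC : ∀ p, |f p| ≤ C) (θ : Θ) :
    |condVar L f θ| ≤ (2 * C) ^ 2 := by
  rw [condVar_eq_condMean]
  refine abs_condMean_le (fun p => ?_) θ
  have hdev : |f p - condMean L f p.1| ≤ 2 * C := by
    linarith [abs_sub (f p) (condMean L f p.1), hC p, abs_condMean_le (L := L) hC p.1]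
  rw [abs_pow]
  exact pow_le_pow_left₀ (abs_nonneg _) hdev 2

theorem integral_one_add_mul_sub_condMean_mul [IsMarkovKernel L] (hf : Measurable f) {C : ℝ}
    (hC : ∀ p, |f p| ≤ C) (t : ℝ) (θ : Θ) :
    ∫ y, (1 + t * (f (θ, y) - condMean L f θ)) * f (θ, y) ∂(L θ)
      = condMean L f θ + t * condVar L f θ :=
  integral_one_add_mul_sub_meanP_mul (L θ)
    ((hf.comp measurable_prodMk_left).memLp_of_abs_le (fun y => hC (θ, y)) 2) t

end condMoments

theorem penalty_nested_worst_case_identity_general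
    {Θ 𝒴 : Type*} [MeasurableSpace Θ] [MeasurableSpace 𝒴]
    (ρ : Measure Θ) [IsProbabilityMeasure ρ]
    (L : Kernel Θ 𝒴) [IsMarkovKernel L]
    (f : Θ × 𝒴 → ℝ) (hf : Measurable f) (hf_bdd : ∃ C : ℝ, ∀ p, |f p| ≤ C)
    (ε δ : ℝ) :
    ∫ θ,
        (1 + ε * ((condMean L f θ + δ * condVar L f θ)
            - ∫ θ', (condMean L f θ' + δ * condVar L f θ') ∂ρ))
          * (∫ y, (1 + δ * (f (θ, y) - condMean L f θ)) * f (θ, y) ∂(L θ)) ∂ρ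
      = (∫ θ, condMean L f θ ∂ρ) + δ * (∫ θ, condVar L f θ ∂ρ)
        + ε * varP ρ (fun θ => condMean L f θ + δ * condVar L f θ) := by
  obtain ⟨C, hC⟩ := hf_bdd
  set Ψ : Θ → ℝ := fun θ => condMean L f θ + δ * condVar L f θ
  have hg := (measurable_condMean (L := L) hf).memLp_of_abs_le (μ := ρ) (abs_condMean_le hC) 2
  have hv := (measurable_condVar (L := L) hf).memLp_of_abs_le (μ := ρ) (abs_condVar_le hC) 2
  have hΨ : MemLp Ψ 2 ρ := hg.add (hv.const_mul δ)
  calc _ = ∫ θ, (1 + ε * (Ψ θ - meanP ρ Ψ)) * Ψ θ ∂ρ := by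
        simp_rw [integral_one_add_mul_sub_condMean_mul hf hC δ]; rfl
    _ = meanP ρ Ψ + ε * varP ρ Ψ := integral_one_add_mul_sub_meanP_mul ρ hΨ ε
    _ = _ := by
        rw [meanP, integral_add (hg.integrable one_le_two)
          ((hv.integrable one_le_two).const_mul δ), integral_const_mul]

/-- Exact identity for the penalty-form worst-case measure (modified χ²-divergence):
with inner worst-case density `q^θ_δ(y) = 1 + δ(f(θ,y) − g(θ))` w.r.t. `L(θ)`,
`Ψ_δ(θ) = g(θ) + δ·v(θ)`, and outer worst-case density
`η_ε(θ) = 1 + ε(Ψ_δ(θ) − ∫Ψ_δ dρ)` w.r.t. `ρ`, the nested worst-case expected cost is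
`∫ η_ε·(∫ q^θ_δ·f dL(θ)) dρ = ∫ g dρ + δ·∫ v dρ + ε·Var_ρ(Ψ_δ)`. -/
theorem penalty_nested_worst_case_identity
    {Θ 𝒴 : Type*} [MeasurableSpace Θ] [MeasurableSpace 𝒴]
    (ρ : Measure Θ) [IsProbabilityMeasure ρ]
    (L : Kernel Θ 𝒴) [IsMarkovKernel L]
    (f : Θ × 𝒴 → ℝ) (hf : Measurable f) (hf_bdd : ∃ C : ℝ, ∀ p, |f p| ≤ C)
    (ε δ : ℝ) (hε : 0 < ε) (hδ : 0 < δ) :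
    ∫ θ,
        (1 + ε * ((condMean L f θ + δ * condVar L f θ)
            - ∫ θ', (condMean L f θ' + δ * condVar L f θ') ∂ρ))
          * (∫ y, (1 + δ * (f (θ, y) - condMean L f θ)) * f (θ, y) ∂(L θ)) ∂ρ
      = (∫ θ, condMean L f θ ∂ρ) + δ * (∫ θ, condVar L f θ ∂ρ)
        + ε * varP ρ (fun θ => condMean L f θ + δ * condVar L f θ) :=
  penalty_nested_worst_case_identity_general ρ L f hf hf_bdd ε δ
end

section
/- Let P be a probability measure on a measurable space Ω, let f : Ω → ℝ be bounded and measurable, let α ∈ (0, 1) and ε ∈ (0, 1]. Then sup over measurable q : Ω → ℝ with ∫ q dP = 1 and 1 − ε ≤ q ≤ 1 + ε·α/(1−α) P-a.e. of ∫ q·f dP equals (1 − ε)·∫ f dP + ε·CVaR_α(f), where CVaR_α(f) := inf_{γ ∈ ℝ} ( γ + (1/(1−α))·∫ max(f − γ, 0) dP ). -/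
/-!
Writing `q = (1 - ε) + ε r` and `c = 1 / (1 - α)`, the admissible `q` correspond to the densities
`0 ≤ r ≤ c`, and `∫ q f = (1 - ε) E f + ε ∫ r f`; so it suffices that
`sup_r ∫ r f = inf_γ (γ + c E (f - γ)⁺)`. Integrating the pointwise bound
`r f ≤ c (f - γ)⁺ + γ r` gives `≤`. Equality is attained at an `α`-quantile `γ` of `f` by the
density equal to `c` on `{f > γ}`, to `0` on `{f < γ}`, and to the constant on the atom `{f = γ}`
that makes `∫ r = 1`.
-/

open MeasureTheory ProbabilityTheory Set Filter Topology

lemma mul_le_mul_max_sub_zero_add {r c x γ : ℝ} (hr₀ : 0 ≤ r) (hrc : r ≤ c) :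
    r * x ≤ c * max (x - γ) 0 + r * γ := by
  nlinarith [le_max_left (x - γ) 0, le_max_right (x - γ) 0]

lemma mul_eq_mul_max_sub_zero_add {r c x γ : ℝ} (hgt : γ < x → r = c) (hlt : x < γ → r = 0) :
    r * x = c * max (x - γ) 0 + r * γ := by
  rcases lt_trichotomy x γ with h | rfl | h
  · rw [hlt h, max_eq_right (by linarith)]; ring
  · simp
  · rw [hgt h, max_eq_left (by linarith)]; ring

lemma exists_measureReal_Ioi_le_le_measureReal_Ici (μ : Measure ℝ) [IsProbabilityMeasure μ]
    {β : ℝ} (hβ : β ∈ Ioo 0 1) : ∃ γ, μ.real (Ioi γ) ≤ β ∧ β ≤ μ.real (Ici γ) := by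
  obtain ⟨hβ₀, hβ₁⟩ := hβ
  set F := cdf μ
  -- `γ = sInf T` is the lower `(1 - β)`-quantile of `μ`
  set T := {x | 1 - β ≤ F x}
  have hT : T.Nonempty :=
    ((tendsto_cdf_atTop μ).eventually (eventually_ge_nhds (by linarith))).exists
  obtain ⟨x₀, hx₀⟩ := ((tendsto_cdf_atBot μ).eventually
    (eventually_lt_nhds (show 0 < 1 - β by linarith))).exists_forall_of_atBot
  have hTbdd : BddBelow T :=
    ⟨x₀, fun x hx => le_of_not_gt fun h => (hx₀ x h.le).not_ge hx⟩
  have hlower : ∀ x < sInf T, F x ≤ 1 - β := fun x hx =>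
    le_of_not_ge fun h => (csInf_le hTbdd h).not_gt hx
  have hupper : ∀ x > sInf T, 1 - β ≤ F x := fun x hx => by
    obtain ⟨t, ht, htx⟩ := exists_lt_of_csInf_lt hT hx
    exact ht.trans (monotone_cdf μ htx.le)
  refine ⟨sInf T, ?_, ?_⟩
  · have hright : 1 - β ≤ F (sInf T) :=
      ge_of_tendsto ((F.right_continuous _).mono Ioi_subset_Ici_self)
        (eventually_nhdsWithin_of_forall hupper)
    rw [← compl_Iic, probReal_compl_eq_one_sub measurableSet_Iic, ← cdf_eq_real]
    linarith
  · have hleft : Function.leftLim F (sInf T) ≤ 1 - β :=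
      le_of_tendsto (F.mono.tendsto_leftLim _) (eventually_nhdsWithin_of_forall hlower)
    have hIio : μ.real (Iio (sInf T)) = Function.leftLim F (sInf T) := by
      rw [measureReal_def, ← measure_cdf μ, F.measure_Iio (tendsto_cdf_atBot μ), sub_zero,
        ENNReal.toReal_ofReal (ge_of_tendsto' (F.mono.tendsto_leftLim _) (cdf_nonneg μ))]
    rw [← compl_Iio, probReal_compl_eq_one_sub measurableSet_Iio, hIio]
    linarith

section Densities

variable {Ω : Type*} [MeasurableSpace Ω] {P : Measure Ω} {f r : Ω → ℝ} {c : ℝ}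

def boundedDensityIntegrals (P : Measure Ω) (f : Ω → ℝ) (a b : ℝ) : Set ℝ :=
  {x | ∃ q : Ω → ℝ, Measurable q ∧ (∫ ω, q ω ∂P = 1) ∧
    (∀ᵐ ω ∂P, a ≤ q ω ∧ q ω ≤ b) ∧ x = ∫ ω, q ω * f ω ∂P}

lemma integrable_mul_of_ae_mem_Icc {a b : ℝ} (hf : Integrable f P) (hr : Measurable r)
    (hrab : ∀ᵐ ω ∂P, a ≤ r ω ∧ r ω ≤ b) : Integrable (fun ω => r ω * f ω) P :=
  hf.bdd_mul hr.aestronglyMeasurable (hrab.mono fun _ h => abs_le_max_abs_abs h.1 h.2)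

lemma integral_mul_max_sub_zero_add [IsFiniteMeasure P] {γ : ℝ} (hf : Integrable f P)
    (hr : Integrable r P) (hr₁ : ∫ ω, r ω ∂P = 1) :
    ∫ ω, (c * max (f ω - γ) 0 + r ω * γ) ∂P = γ + c * ∫ ω, max (f ω - γ) 0 ∂P := by
  have hmax : Integrable (fun ω => max (f ω - γ) 0) P := by fun_prop
  rw [integral_add (hmax.const_mul c) (hr.mul_const γ), integral_const_mul, integral_mul_const,
    hr₁]
  ring

lemma integral_mul_le_add_mul_integral_max_sub [IsFiniteMeasure P] (hf : Integrable f P)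
    (hr : Measurable r) (hr₁ : ∫ ω, r ω ∂P = 1) (hrc : ∀ᵐ ω ∂P, 0 ≤ r ω ∧ r ω ≤ c) (γ : ℝ) :
    ∫ ω, r ω * f ω ∂P ≤ γ + c * ∫ ω, max (f ω - γ) 0 ∂P := by
  have hri : Integrable r P := .of_mem_Icc 0 c hr.aemeasurable hrc
  calc ∫ ω, r ω * f ω ∂P ≤ ∫ ω, (c * max (f ω - γ) 0 + r ω * γ) ∂P :=
        integral_mono_ae (integrable_mul_of_ae_mem_Icc hf hr hrc) (by fun_prop)
          (hrc.mono fun ω h => mul_le_mul_max_sub_zero_add h.1 h.2)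
    _ = γ + c * ∫ ω, max (f ω - γ) 0 ∂P := integral_mul_max_sub_zero_add hf hri hr₁

lemma exists_density_integral_mul_eq [IsFiniteMeasure P] {γ : ℝ} (hf : Measurable f)
    (hfi : Integrable f P) (hc : 0 ≤ c) (hgt : P.real {ω | γ < f ω} * c ≤ 1)
    (hge : 1 ≤ P.real {ω | γ ≤ f ω} * c) :
    ∃ r : Ω → ℝ, Measurable r ∧ (∫ ω, r ω ∂P = 1) ∧ (∀ ω, 0 ≤ r ω ∧ r ω ≤ c) ∧
      ∫ ω, r ω * f ω ∂P = γ + c * ∫ ω, max (f ω - γ) 0 ∂P := by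
  -- `r` below is `c` on `{γ < f}`, `θ` on the atom `{f = γ}` and `0` on `{f < γ}`
  obtain ⟨θ, ⟨hθ₀, hθc⟩, hθ⟩ : ∃ θ ∈ Icc 0 c,
      θ * P.real {ω | γ ≤ f ω} + (c - θ) * P.real {ω | γ < f ω} = 1 :=
    intermediate_value_Icc hc (by fun_prop)
      ⟨by simpa [mul_comm] using hgt, by simpa [mul_comm] using hge⟩
  have hle : MeasurableSet {ω | γ ≤ f ω} := measurableSet_le measurable_const hf
  have hlt : MeasurableSet {ω | γ < f ω} := measurableSet_lt measurable_const hf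
  set r : Ω → ℝ := fun ω =>
    {ω | γ ≤ f ω}.indicator (fun _ => θ) ω + {ω | γ < f ω}.indicator (fun _ => c - θ) ω
  have hi₁ := (integrable_const (μ := P) θ).indicator hle
  have hi₂ := (integrable_const (μ := P) (c - θ)).indicator hlt
  have hr₁ : ∫ ω, r ω ∂P = 1 := by
    rw [integral_add hi₁ hi₂, integral_indicator_const _ hle, integral_indicator_const _ hlt,
      smul_eq_mul, smul_eq_mul, ← hθ]
    ring
  have hr_gt : ∀ ω, γ < f ω → r ω = c := fun ω h => by
    simp [r, indicator_of_mem, h, h.le]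
  have hr_lt : ∀ ω, f ω < γ → r ω = 0 := fun ω h => by
    simp [r, indicator_of_notMem, h.not_ge, h.not_gt]
  refine ⟨r, (measurable_const.indicator hle).add (measurable_const.indicator hlt), hr₁,
    fun ω => ?_, ?_⟩
  · rcases lt_trichotomy (f ω) γ with h | h | h
    · simp [hr_lt ω h, hc]
    · simp [r, h, hθ₀, hθc]
    · simp [hr_gt ω h, hc]
  · rw [← integral_mul_max_sub_zero_add hfi (hi₁.add hi₂) hr₁]
    exact integral_congr_ae
      (ae_of_all _ fun ω => mul_eq_mul_max_sub_zero_add (hr_gt ω) (hr_lt ω))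

lemma isGreatest_boundedDensityIntegrals_zero [IsProbabilityMeasure P] (hf : Measurable f)
    (hfi : Integrable f P) (hc : 1 < c) :
    IsGreatest (boundedDensityIntegrals P f 0 c) (⨅ γ, γ + c * ∫ ω, max (f ω - γ) 0 ∂P) := by
  have hc₀ : 0 < c := by linarith
  have hle_cvar : ∀ x ∈ boundedDensityIntegrals P f 0 c,
      x ≤ ⨅ γ, γ + c * ∫ ω, max (f ω - γ) 0 ∂P := by
    rintro x ⟨r, hr, hr₁, hrc, rfl⟩
    exact le_ciInf (integral_mul_le_add_mul_integral_max_sub hfi hr hr₁ hrc)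
  have := Measure.isProbabilityMeasure_map (μ := P) hf.aemeasurable
  obtain ⟨γ, hgt, hge⟩ := exists_measureReal_Ioi_le_le_measureReal_Ici (P.map f)
    (β := c⁻¹) ⟨by positivity, inv_lt_one_of_one_lt₀ hc⟩
  rw [map_measureReal_apply hf measurableSet_Ioi] at hgt
  rw [map_measureReal_apply hf measurableSet_Ici] at hge
  obtain ⟨r, hr, hr₁, hrc, hrf⟩ := exists_density_integral_mul_eq hf hfi hc₀.le
    ((mul_le_mul_of_nonneg_right hgt hc₀.le).trans_eq (inv_mul_cancel₀ hc₀.ne'))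
    ((inv_mul_cancel₀ hc₀.ne').symm.trans_le (mul_le_mul_of_nonneg_right hge hc₀.le))
  have hub := integral_mul_le_add_mul_integral_max_sub hfi hr hr₁ (ae_of_all _ hrc)
  have hcvar : ⨅ γ, γ + c * ∫ ω, max (f ω - γ) 0 ∂P = ∫ ω, r ω * f ω ∂P :=
    le_antisymm (hrf ▸ ciInf_le ⟨_, forall_mem_range.2 hub⟩ γ) (le_ciInf hub)
  exact ⟨hcvar ▸ ⟨r, hr, hr₁, ae_of_all _ hrc, rfl⟩, hle_cvar⟩

lemma boundedDensityIntegrals_one_sub_add_mul [IsProbabilityMeasure P] (hf : Integrable f P)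
    {ε : ℝ} (hε : 0 < ε) :
    boundedDensityIntegrals P f (1 - ε) (1 - ε + ε * c) =
      (fun x => (1 - ε) * ∫ ω, f ω ∂P + ε * x) '' boundedDensityIntegrals P f 0 c := by
  have haffine : ∀ r : Ω → ℝ, Measurable r → (∀ᵐ ω ∂P, 0 ≤ r ω ∧ r ω ≤ c) →
      (∫ ω, (1 - ε + ε * r ω) ∂P = 1 ↔ ∫ ω, r ω ∂P = 1) ∧
      ∫ ω, (1 - ε + ε * r ω) * f ω ∂P = (1 - ε) * ∫ ω, f ω ∂P + ε * ∫ ω, r ω * f ω ∂P := by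
    intro r hr hrc
    have hri : Integrable r P := .of_mem_Icc 0 c hr.aemeasurable hrc
    have hrf := integrable_mul_of_ae_mem_Icc hf hr hrc
    constructor
    · rw [integral_add (integrable_const _) (hri.const_mul ε), integral_const_mul,
        integral_const, probReal_univ, one_smul]
      constructor <;> intro h
      · nlinarith
      · rw [h]; ring
    · simp_rw [add_mul, mul_assoc]
      rw [integral_add (hf.const_mul _) (hrf.const_mul ε), integral_const_mul, integral_const_mul]
  ext x
  constructor
  · rintro ⟨q, hq, hq₁, hqb, rfl⟩
    obtain ⟨r, hr, hrc, rfl⟩ : ∃ r : Ω → ℝ, Measurable r ∧ (∀ᵐ ω ∂P, 0 ≤ r ω ∧ r ω ≤ c) ∧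
        q = fun ω => 1 - ε + ε * r ω :=
      ⟨fun ω => (q ω - (1 - ε)) / ε, by fun_prop,
        hqb.mono fun ω h => ⟨div_nonneg (by linarith [h.1]) hε.le,
          (div_le_iff₀ hε).2 (by linarith [h.2])⟩,
        funext fun ω => by field_simp; ring⟩
    obtain ⟨h₁, h₂⟩ := haffine r hr hrc
    exact ⟨_, ⟨r, hr, h₁.1 hq₁, hrc, rfl⟩, h₂.symm⟩
  · rintro ⟨_, ⟨r, hr, hr₁, hrc, rfl⟩, rfl⟩
    obtain ⟨h₁, h₂⟩ := haffine r hr hrc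
    exact ⟨_, by fun_prop, h₁.2 hr₁,
      hrc.mono fun ω h => ⟨by nlinarith [h.1], by nlinarith [h.2]⟩, h₂.symm⟩

end Densities

/-- CVaR duality for the indicator-type φ-divergence uncertainty set: the supremum of
`∫ q f dP` over measurable densities `q` with `∫ q dP = 1` and
`1 − ε ≤ q ≤ 1 + ε·α/(1−α)` `P`-a.e. equals `(1−ε)·E_P[f] + ε·CVaR_α(f)`, where
`CVaR_α(f) = inf_γ { γ + (1/(1−α))·∫ max(f − γ, 0) dP }`. -/
theorem indicator_divergence_worst_case_eq_cvar
    {Ω : Type*} [MeasurableSpace Ω]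
    (P : Measure Ω) [IsProbabilityMeasure P]
    (f : Ω → ℝ) (hf : Measurable f) (hf_bdd : ∃ C : ℝ, ∀ ω, |f ω| ≤ C)
    (α ε : ℝ) (hα : α ∈ Set.Ioo (0 : ℝ) 1) (hε : ε ∈ Set.Ioc (0 : ℝ) 1) :
    sSup {x | ∃ q : Ω → ℝ, Measurable q ∧ (∫ ω, q ω ∂P = 1) ∧
        (∀ᵐ ω ∂P, 1 - ε ≤ q ω ∧ q ω ≤ 1 + ε * α / (1 - α)) ∧
        x = ∫ ω, q ω * f ω ∂P}
      = (1 - ε) * (∫ ω, f ω ∂P)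
        + ε * ⨅ γ : ℝ, (γ + (1 / (1 - α)) * ∫ ω, max (f ω - γ) 0 ∂P) := by
  obtain ⟨hα₀, hα₁⟩ := hα
  obtain ⟨C, hC⟩ := hf_bdd
  have hfi : Integrable f P := .of_bound hf.aestronglyMeasurable C (ae_of_all _ hC)
  have hc : 1 < 1 / (1 - α) := by rw [lt_div_iff₀ (by linarith)]; linarith
  have hbound : 1 + ε * α / (1 - α) = 1 - ε + ε * (1 / (1 - α)) := by
    field_simp [(by linarith : (1 - α) ≠ 0)]; ring
  change sSup (boundedDensityIntegrals P f (1 - ε) (1 + ε * α / (1 - α))) = _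
  rw [hbound, boundedDensityIntegrals_one_sub_add_mul hfi hε.1]
  exact (((monotone_id.const_mul hε.1.le).const_add _).map_isGreatest
    (isGreatest_boundedDensityIntegrals_zero hf hfi hc)).csSup_eq
end
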